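/- arXiv:2511.05386 — 4 statements merged into one kernel-verified Lean document; each statement's English description precedes it below -/
import Mathlib

section
/- For p > 0 and the constant c_p = Γ(p/2)Γ(1/2)/Γ((p+1)/2), the Ullman density ρ(x) = 1_{|x|≤1} · (p|x|^{p-1}/π) · ∫_{|x|}^1 y^{-p}/√(1-y²) dy defines a probability measure on [-1,1], i.e. ∫_{-1}^1 ρ(x) dx = 1. -/
/-!
On `[0, 1]` the density is the derivative of
`G u = (u ^ p * ∫ y in u..1, y ^ (-p) / √(1 - y ^ 2) + arcsin u) / π`:
differentiating the lower limit produces `-u ^ p * u ^ (-p) / √(1 - u ^ 2)`, which cancels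
`arcsin' u`. Hence `∫ x in 0..1, ρ x = G 1 - G 0 = 1 / 2`, once `G` is known to be continuous at
`0`, i.e. `u ^ p * ∫ y in u..1, y ^ (-p) / √(1 - y ^ 2) → 0`; this follows by splitting the
integral at `√u` and bounding `y ^ (-p)` by its value at the left end of each piece.
Since `ρ` is even, the integral over `[-1, 1]` is twice that.
-/

open MeasureTheory

/-- The Ullman density: `ρ(x) = (p|x|^{p-1}/π) ∫_{|x|}^1 y^{-p}/√(1-y²) dy`. -/
noncomputable def ullmanDensity (p x : ℝ) : ℝ :=
  p * |x| ^ (p - 1) / Real.pi * ∫ y in |x|..1, y ^ (-p) / Real.sqrt (1 - y ^ 2)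

open Set Real Filter Topology intervalIntegral

theorem intervalIntegral.integral_neg_to_self_of_even {E : Type*} [NormedAddCommGroup E]
    [NormedSpace ℝ E] {f : ℝ → E} {a : ℝ} (hf : ∀ x, f (-x) = f x)
    (hint : IntervalIntegrable f volume 0 a) : ∫ x in -a..a, f x = 2 • ∫ x in 0..a, f x := by
  have hneg : IntervalIntegrable f volume (-a) 0 := by
    simpa [hf] using ((IntervalIntegrable.iff_comp_neg).1 hint).symm
  have hsymm : ∫ x in -a..0, f x = ∫ x in 0..a, f x := by
    simpa [hf] using (integral_comp_neg (a := 0) (b := a) f).symm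
  rw [← integral_add_adjacent_intervals hneg hint, hsymm, two_nsmul]

theorem hasDerivAt_arcsin_of_mem_Ioo {x : ℝ} (hx : x ∈ Ioo (-1) 1) :
    HasDerivAt arcsin (√(1 - x ^ 2))⁻¹ x := by
  simpa only [one_div] using hasDerivAt_arcsin hx.1.ne' hx.2.ne

theorem intervalIntegrable_inv_sqrt_one_sub_sq {a b : ℝ} (ha : -1 ≤ a) (hab : a ≤ b)
    (hb : b ≤ 1) : IntervalIntegrable (fun y => (√(1 - y ^ 2))⁻¹) volume a b := by
  refine intervalIntegrable_deriv_of_nonneg continuous_arcsin.continuousOn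
    (fun x hx => hasDerivAt_arcsin_of_mem_Ioo ?_) (fun _ _ => by positivity)
  rw [min_eq_left hab, max_eq_right hab] at hx
  exact ⟨ha.trans_lt hx.1, hx.2.trans_le hb⟩

theorem integral_inv_sqrt_one_sub_sq {a b : ℝ} (ha : -1 ≤ a) (hab : a ≤ b) (hb : b ≤ 1) :
    ∫ y in a..b, (√(1 - y ^ 2))⁻¹ = arcsin b - arcsin a :=
  integral_eq_sub_of_hasDerivAt_of_le hab continuous_arcsin.continuousOn
    (fun _ hx => hasDerivAt_arcsin_of_mem_Ioo ⟨ha.trans_lt hx.1, hx.2.trans_le hb⟩)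
    (intervalIntegrable_inv_sqrt_one_sub_sq ha hab hb)

noncomputable def ullmanKernel (p y : ℝ) : ℝ := y ^ (-p) / √(1 - y ^ 2)

noncomputable def ullmanTail (p x : ℝ) : ℝ := ∫ y in x..1, ullmanKernel p y

noncomputable def ullmanPrimitive (p u : ℝ) : ℝ := (u ^ p * ullmanTail p u + arcsin u) / π

section Ullman

variable {p : ℝ}

theorem ullmanKernel_nonneg {y : ℝ} (hy : 0 ≤ y) : 0 ≤ ullmanKernel p y := by
  unfold ullmanKernel; positivity

theorem continuousAt_ullmanKernel {y : ℝ} (hy : y ∈ Ioo 0 1) :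
    ContinuousAt (ullmanKernel p) y := by
  refine (continuousAt_rpow_const y (-p) (Or.inl hy.1.ne')).div (by fun_prop) ?_
  rw [Real.sqrt_ne_zero']
  nlinarith [hy.1, hy.2]

theorem intervalIntegrable_ullmanKernel {a b : ℝ} (ha : 0 < a) (hab : a ≤ b) (hb : b ≤ 1) :
    IntervalIntegrable (ullmanKernel p) volume a b := by
  have hsub : uIcc a b ⊆ Ioi 0 := by
    rw [uIcc_of_le hab]; exact fun y hy => ha.trans_le hy.1
  have hinv := intervalIntegrable_inv_sqrt_one_sub_sq (by linarith) hab hb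
  rw [show ullmanKernel p = fun y => y ^ (-p) * (√(1 - y ^ 2))⁻¹ from
    funext fun y => div_eq_mul_inv _ _]
  exact hinv.continuousOn_mul (continuousOn_id.rpow_const fun y hy => Or.inl (hsub hy).ne')

theorem integral_ullmanKernel_le (hp : 0 ≤ p) {a b : ℝ} (ha : 0 < a) (hab : a ≤ b)
    (hb : b ≤ 1) : ∫ y in a..b, ullmanKernel p y ≤ a ^ (-p) * (arcsin b - arcsin a) := by
  rw [← integral_inv_sqrt_one_sub_sq (by linarith) hab hb,
    ← intervalIntegral.integral_const_mul]
  refine integral_mono_on hab (intervalIntegrable_ullmanKernel ha hab hb)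
    ((intervalIntegrable_inv_sqrt_one_sub_sq (by linarith) hab hb).const_mul _) fun y hy => ?_
  rw [ullmanKernel, div_eq_mul_inv]
  exact mul_le_mul_of_nonneg_right (rpow_le_rpow_of_nonpos ha hy.1 (neg_nonpos.2 hp))
    (by positivity)

theorem ullmanTail_nonneg {x : ℝ} (hx0 : 0 ≤ x) (hx1 : x ≤ 1) : 0 ≤ ullmanTail p x :=
  integral_nonneg hx1 fun _ hy => ullmanKernel_nonneg (hx0.trans hy.1)

theorem continuousOn_ullmanTail {a : ℝ} (ha : 0 < a) (ha1 : a ≤ 1) :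
    ContinuousOn (ullmanTail p) (Icc a 1) := by
  have hint : IntegrableOn (ullmanKernel p) (uIcc a 1) := by
    rw [uIcc_of_le ha1, ← intervalIntegrable_iff_integrableOn_Icc_of_le ha1]
    exact intervalIntegrable_ullmanKernel ha ha1 le_rfl
  have := continuousOn_primitive_interval_left hint
  rwa [uIcc_of_le ha1] at this

theorem hasDerivAt_ullmanTail {x : ℝ} (hx : x ∈ Ioo 0 1) :
    HasDerivAt (ullmanTail p) (-ullmanKernel p x) x :=
  integral_hasDerivAt_left (intervalIntegrable_ullmanKernel hx.1 hx.2.le le_rfl)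
    (ContinuousOn.stronglyMeasurableAtFilter isOpen_Ioo
      (fun _ hy => (continuousAt_ullmanKernel hy).continuousWithinAt) x hx)
    (continuousAt_ullmanKernel hx)

theorem hasDerivAt_ullmanPrimitive {x : ℝ} (hx : x ∈ Ioo 0 1) :
    HasDerivAt (ullmanPrimitive p) (ullmanDensity p x) x := by
  have hpow : HasDerivAt (fun u => u ^ p) (p * x ^ (p - 1)) x :=
    hasDerivAt_rpow_const (Or.inl hx.1.ne')
  have hasin := hasDerivAt_arcsin_of_mem_Ioo ⟨by linarith [hx.1], hx.2⟩
  refine (((hpow.mul (hasDerivAt_ullmanTail hx)).add hasin).div_const π).congr_deriv ?_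
  have hcancel : x ^ p * x ^ (-p) = 1 := by rw [← rpow_add hx.1, add_neg_cancel, rpow_zero]
  rw [ullmanDensity, abs_of_pos hx.1, ullmanKernel, mul_neg, ← mul_div_assoc, hcancel]
  unfold ullmanTail ullmanKernel
  ring

theorem mul_ullmanTail_le (hp : 0 ≤ p) {u : ℝ} (hu0 : 0 < u) (hu1 : u ≤ 1) :
    u ^ p * ullmanTail p u ≤ arcsin √u - arcsin u + u ^ (p / 2) * (π / 2) := by
  have hsqrt_pos : 0 < √u := sqrt_pos.2 hu0
  have hsqrt_le : √u ≤ 1 := sqrt_le_one.2 hu1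
  have hle_sqrt : u ≤ √u := by
    nlinarith [sq_sqrt hu0.le, sqrt_nonneg u]
  have hnear := integral_ullmanKernel_le hp hu0 hle_sqrt hsqrt_le
  have hfar := integral_ullmanKernel_le hp hsqrt_pos hsqrt_le le_rfl
  have hcancel : u ^ p * u ^ (-p) = 1 := by rw [← rpow_add hu0, add_neg_cancel, rpow_zero]
  have hhalf : u ^ p * √u ^ (-p) = u ^ (p / 2) := by
    rw [sqrt_eq_rpow, ← rpow_mul hu0.le, ← rpow_add hu0]
    ring_nf
  have harcsin : arcsin 1 - arcsin √u ≤ π / 2 := by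
    rw [arcsin_one]; linarith [arcsin_nonneg.2 hsqrt_pos.le]
  rw [ullmanTail, ← integral_add_adjacent_intervals
    (intervalIntegrable_ullmanKernel hu0 hle_sqrt hsqrt_le)
    (intervalIntegrable_ullmanKernel hsqrt_pos hsqrt_le le_rfl), mul_add]
  have hup : 0 ≤ u ^ p := rpow_nonneg hu0.le p
  refine add_le_add ?_ ?_
  · calc u ^ p * ∫ y in u..√u, ullmanKernel p y
        ≤ u ^ p * (u ^ (-p) * (arcsin √u - arcsin u)) := mul_le_mul_of_nonneg_left hnear hup
      _ = arcsin √u - arcsin u := by rw [← mul_assoc, hcancel, one_mul]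
  · calc u ^ p * ∫ y in √u..1, ullmanKernel p y
        ≤ u ^ p * (√u ^ (-p) * (arcsin 1 - arcsin √u)) := mul_le_mul_of_nonneg_left hfar hup
      _ = u ^ (p / 2) * (arcsin 1 - arcsin √u) := by rw [← mul_assoc, hhalf]
      _ ≤ u ^ (p / 2) * (π / 2) := mul_le_mul_of_nonneg_left harcsin (rpow_nonneg hu0.le _)

theorem tendsto_mul_ullmanTail_nhdsGT_zero (hp : 0 < p) :
    Tendsto (fun u => u ^ p * ullmanTail p u) (𝓝[>] 0) (𝓝 0) := by
  have hbound : Continuous fun u : ℝ => arcsin √u - arcsin u + u ^ (p / 2) * (π / 2) :=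
    ((continuous_arcsin.comp continuous_sqrt).sub continuous_arcsin).add
      ((continuous_rpow_const (by positivity)).mul continuous_const)
  have hlim := (hbound.tendsto 0).mono_left (nhdsWithin_le_nhds (s := Ioi 0))
  rw [sqrt_zero, arcsin_zero, sub_zero, zero_rpow (half_pos hp).ne', zero_mul, add_zero] at hlim
  refine squeeze_zero' ?_ ?_ hlim
  · filter_upwards [Ioo_mem_nhdsGT (zero_lt_one' ℝ)] with u hu
    exact mul_nonneg (rpow_nonneg hu.1.le _) (ullmanTail_nonneg hu.1.le hu.2.le)
  · filter_upwards [Ioo_mem_nhdsGT (zero_lt_one' ℝ)] with u hu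
    exact mul_ullmanTail_le hp.le hu.1 hu.2.le

-- `ullmanTail p 0` is a junk value when `p ≥ 1` (the kernel is not integrable at `0`), but it
-- is multiplied by `0 ^ p = 0`.
theorem ullmanPrimitive_zero (hp : 0 < p) : ullmanPrimitive p 0 = 0 := by
  simp [ullmanPrimitive, zero_rpow hp.ne']

theorem ullmanPrimitive_one : ullmanPrimitive p 1 = 1 / 2 := by
  simp only [ullmanPrimitive, ullmanTail, integral_same, mul_zero, zero_add, arcsin_one]
  field_simp

theorem continuousOn_ullmanPrimitive_Icc_of_pos {a : ℝ} (ha : 0 < a) (ha1 : a ≤ 1) :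
    ContinuousOn (ullmanPrimitive p) (Icc a 1) :=
  ((((continuousOn_id.rpow_const fun _ hx => Or.inl (ha.trans_le hx.1).ne').mul
    (continuousOn_ullmanTail ha ha1)).add continuous_arcsin.continuousOn).div_const π)

theorem continuousWithinAt_ullmanPrimitive_zero (hp : 0 < p) :
    ContinuousWithinAt (ullmanPrimitive p) (Ioi 0) 0 := by
  have h := ((tendsto_mul_ullmanTail_nhdsGT_zero hp).add
    ((continuous_arcsin.tendsto 0).mono_left nhdsWithin_le_nhds)).div_const π
  rw [arcsin_zero, add_zero, zero_div] at h
  rw [ContinuousWithinAt, ullmanPrimitive_zero hp]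
  exact h

theorem continuousOn_ullmanPrimitive (hp : 0 < p) :
    ContinuousOn (ullmanPrimitive p) (Icc 0 1) := by
  intro x hx
  rcases hx.1.eq_or_lt with rfl | hx0
  · exact (continuousWithinAt_insert_self.2 (continuousWithinAt_ullmanPrimitive_zero hp)).mono
      fun y hy => hy.1.eq_or_lt.imp Eq.symm id
  · refine ((continuousOn_ullmanPrimitive_Icc_of_pos (half_pos hx0) (by linarith [hx.2])) x
      ⟨by linarith, hx.2⟩).mono_of_mem_nhdsWithin ?_
    exact mem_nhdsWithin.2 ⟨Ioi (x / 2), isOpen_Ioi, half_lt_self hx0,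
      fun y hy => ⟨le_of_lt hy.1, hy.2.2⟩⟩

theorem ullmanDensity_nonneg (hp : 0 ≤ p) {x : ℝ} (hx : |x| ≤ 1) : 0 ≤ ullmanDensity p x :=
  mul_nonneg (by positivity) (ullmanTail_nonneg (abs_nonneg x) hx)

theorem ullmanDensity_neg (x : ℝ) : ullmanDensity p (-x) = ullmanDensity p x := by
  rw [ullmanDensity, ullmanDensity, abs_neg]

theorem intervalIntegrable_ullmanDensity (hp : 0 < p) :
    IntervalIntegrable (ullmanDensity p) volume 0 1 := by
  have hcont : ContinuousOn (ullmanPrimitive p) (uIcc 0 1) := by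
    rw [uIcc_of_le zero_le_one]; exact continuousOn_ullmanPrimitive hp
  refine intervalIntegrable_deriv_of_nonneg hcont ?_ ?_ <;>
    rw [min_eq_left zero_le_one, max_eq_right zero_le_one]
  · exact fun x hx => hasDerivAt_ullmanPrimitive hx
  · exact fun x hx => ullmanDensity_nonneg hp.le (by rw [abs_of_pos hx.1]; exact hx.2.le)

theorem integral_ullmanDensity_zero_one (hp : 0 < p) :
    ∫ x in (0 : ℝ)..1, ullmanDensity p x = 1 / 2 := by
  rw [integral_eq_sub_of_hasDerivAt_of_le zero_le_one (continuousOn_ullmanPrimitive hp)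
    (fun x hx => hasDerivAt_ullmanPrimitive hx) (intervalIntegrable_ullmanDensity hp),
    ullmanPrimitive_one, ullmanPrimitive_zero hp, sub_zero]

end Ullman

/-- For `p > 0`, the Ullman density integrates to 1 on `[-1,1]`,
hence defines a probability measure on `[-1,1]`. -/
theorem stmt0 (p : ℝ) (hp : 0 < p) :
    ∫ x in (-1:ℝ)..1, ullmanDensity p x = 1 := by
  rw [integral_neg_to_self_of_even ullmanDensity_neg (intervalIntegrable_ullmanDensity hp),
    integral_ullmanDensity_zero_one hp]
  norm_num
end

section
/- Let p > 2 and g(x) = p c_p |x|^p on ℝ (so g = x·V'(x) with V(x) = c_p|x|^p). There exists C > 0 such that for all real t, λ: |g(t) − g(λ) − (t−λ)g'(λ) − ((t−λ)²/2) g''(λ)| ≤ C |t−λ|³ (max(|λ|,|t|))^{p−3}. -/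
/-!
Since `g = p c |·|^p`, its Taylor remainder is `p c` times that of `φ = |·|^p`, whose first two
derivatives are `p |x|^(p-2) x` and `p (p-1) |x|^(p-2)`. Let `M = max |λ| |t|`. If
`M ≤ 2 |t - λ|`, each term of the remainder is `O(M^p) = O(M^3 M^(p-3)) = O(|t - λ|^3 M^(p-3))`.
Otherwise the segment between `λ` and `t` stays in `M/2 ≤ |x| ≤ M`, where `φ` is smooth with
`|φ'''(x)| = p (p-1) (p-2) |x|^(p-3) ≤ 2 p (p-1) (p-2) M^(p-3)` (as `p - 3 ≥ -1`), and the
mean value inequality bounds the remainder by `sup |φ'''| · |t - λ|^3`.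
-/

/-- `g(x) = p · c_p · |x|^p`, so that `g(x) = x V'(x)` with `V(x) = c_p |x|^p`. -/
noncomputable def gfun (p c : ℝ) : ℝ → ℝ := fun x => p * c * |x| ^ p

open Set Filter Topology

theorem hasDerivAt_abs_rpow_of_ne_zero (q : ℝ) {x : ℝ} (hx : x ≠ 0) :
    HasDerivAt (fun y : ℝ => |y| ^ q) (q * |x| ^ (q - 2) * x) x := by
  have hx' : |x| ≠ 0 := abs_ne_zero.2 hx
  convert (hasDerivAt_abs hx).rpow_const (p := q) (Or.inl hx') using 1
  rw [show q - 1 = q - 2 + 1 by ring, Real.rpow_add_one hx']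
  linear_combination (-(q * |x| ^ (q - 2))) * sign_mul_abs x

theorem hasDerivAt_abs_rpow_mul_self {q : ℝ} (hq : 0 < q) (x : ℝ) :
    HasDerivAt (fun y : ℝ => |y| ^ q * y) ((q + 1) * |x| ^ q) x := by
  rcases eq_or_ne x 0 with rfl | hx
  · rw [abs_zero, Real.zero_rpow hq.ne', mul_zero, hasDerivAt_iff_tendsto_slope]
    have hcont : ContinuousAt (fun y : ℝ => |y| ^ q) 0 := by
      fun_prop (disch := exact Or.inr hq.le)
    have hslope : slope (fun y : ℝ => |y| ^ q * y) 0 =ᶠ[𝓝[≠] 0] fun y => |y| ^ q := by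
      filter_upwards [self_mem_nhdsWithin] with y (hy : y ≠ 0)
      simp [slope_def_field, Real.zero_rpow hq.ne', hy]
    rw [tendsto_congr' hslope]
    simpa [Real.zero_rpow hq.ne'] using hcont.tendsto.mono_left nhdsWithin_le_nhds
  · have hx' : |x| ≠ 0 := abs_ne_zero.2 hx
    refine ((hasDerivAt_abs_rpow_of_ne_zero q hx).mul (hasDerivAt_id' x)).congr_deriv ?_
    have hpow : |x| ^ q = |x| ^ (q - 2) * |x| * |x| := by
      rw [← Real.rpow_add_one hx', ← Real.rpow_add_one hx']
      ring_nf
    rw [mul_assoc _ x, ← abs_mul_abs_self x, hpow]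
    ring

noncomputable def secondOrderTaylorRemainder (f f' f'' : ℝ → ℝ) (a b : ℝ) : ℝ :=
  f b - f a - (b - a) * f' a - (b - a) ^ 2 / 2 * f'' a

theorem abs_sub_le_mul_of_hasDerivAt_uIcc {f f' : ℝ → ℝ} {a b B : ℝ}
    (hf : ∀ x ∈ uIcc a b, HasDerivAt f (f' x) x) (hB : ∀ x ∈ uIcc a b, |f' x| ≤ B)
    {x : ℝ} (hx : x ∈ uIcc a b) : |f x - f a| ≤ B * |b - a| := by
  have hB0 : 0 ≤ B := (abs_nonneg _).trans (hB a left_mem_uIcc)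
  calc |f x - f a| ≤ B * |x - a| :=
        (convex_uIcc a b).norm_image_sub_le_of_norm_hasDerivWithin_le
          (fun y hy => (hf y hy).hasDerivWithinAt) hB left_mem_uIcc hx
    _ ≤ B * |b - a| := mul_le_mul_of_nonneg_left (abs_sub_left_of_mem_uIcc hx) hB0

/-- Three applications of the mean value inequality, so the constant is `1` rather than `1/6`. -/
theorem abs_secondOrderTaylorRemainder_le {f f' f'' f''' : ℝ → ℝ} {a b B : ℝ}
    (hf : ∀ x ∈ uIcc a b, HasDerivAt f (f' x) x)
    (hf' : ∀ x ∈ uIcc a b, HasDerivAt f' (f'' x) x)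
    (hf'' : ∀ x ∈ uIcc a b, HasDerivAt f'' (f''' x) x)
    (hB : ∀ x ∈ uIcc a b, |f''' x| ≤ B) :
    |secondOrderTaylorRemainder f f' f'' a b| ≤ B * |b - a| ^ 3 := by
  have h₂ : ∀ x ∈ uIcc a b, |f'' x - f'' a| ≤ B * |b - a| :=
    fun x hx => abs_sub_le_mul_of_hasDerivAt_uIcc hf'' hB hx
  have h₁ : ∀ x ∈ uIcc a b, |f' x - f' a - (x - a) * f'' a| ≤ B * |b - a| * |b - a| := by
    intro x hx
    have hderiv : ∀ y ∈ uIcc a b,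
        HasDerivAt (fun y => f' y - (y - a) * f'' a) (f'' y - f'' a) y := fun y hy =>
      ((hf' y hy).sub (((hasDerivAt_id' y).sub_const a).mul_const (f'' a))).congr_deriv (by ring)
    simpa [sub_right_comm] using abs_sub_le_mul_of_hasDerivAt_uIcc hderiv h₂ hx
  have hderiv : ∀ y ∈ uIcc a b,
      HasDerivAt (fun y => f y - (y - a) * f' a - (y - a) ^ 2 / 2 * f'' a)
        (f' y - f' a - (y - a) * f'' a) y := fun y hy => by
    have hsq := ((((hasDerivAt_id y).sub_const a).pow 2).div_const 2).mul_const (f'' a)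
    refine (((hf y hy).sub (((hasDerivAt_id y).sub_const a).mul_const (f' a))).sub
      hsq).congr_deriv ?_
    simp only [id_eq, Nat.cast_ofNat]
    ring
  calc |secondOrderTaylorRemainder f f' f'' a b|
      = |(f b - (b - a) * f' a - (b - a) ^ 2 / 2 * f'' a)
          - (f a - (a - a) * f' a - (a - a) ^ 2 / 2 * f'' a)| := by
        rw [secondOrderTaylorRemainder]; ring_nf
    _ ≤ B * |b - a| * |b - a| * |b - a| :=
        abs_sub_le_mul_of_hasDerivAt_uIcc hderiv h₁ right_mem_uIcc
    _ = B * |b - a| ^ 3 := by ring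

theorem abs_le_max_abs_abs_of_mem_uIcc {a b x : ℝ} (hx : x ∈ uIcc a b) :
    |x| ≤ max |a| |b| := by
  rcases mem_uIcc.1 hx with ⟨hax, hxb⟩ | ⟨hbx, hxa⟩
  · exact abs_le_max_abs_abs hax hxb
  · exact max_comm |b| |a| ▸ abs_le_max_abs_abs hbx hxa

theorem max_abs_abs_le_abs_add_abs_sub_of_mem_uIcc {a b x : ℝ} (hx : x ∈ uIcc a b) :
    max |a| |b| ≤ |x| + |b - a| := by
  have ha := abs_sub_abs_le_abs_sub a x
  have hb := abs_sub_abs_le_abs_sub b x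
  have hxa := abs_sub_left_of_mem_uIcc hx
  have hbx := abs_sub_right_of_mem_uIcc hx
  rw [abs_sub_comm] at hxa
  exact max_le (by linarith) (by linarith)

theorem Real.rpow_le_two_mul_rpow_of_half_le {q M x : ℝ} (hq : -1 ≤ q) (hM : 0 < M)
    (hMx : M / 2 ≤ x) (hxM : x ≤ M) : x ^ q ≤ 2 * M ^ q := by
  have hx : 0 < x := by linarith
  rcases le_total 0 q with hq0 | hq0
  · linarith [Real.rpow_le_rpow hx.le hxM hq0, Real.rpow_nonneg hM.le q]
  · have h2 : (2 : ℝ) ^ (-q) ≤ 2 := by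
      simpa using
        Real.rpow_le_rpow_of_exponent_le (by norm_num : (1 : ℝ) ≤ 2) (by linarith : -q ≤ 1)
    calc x ^ q ≤ (M / 2) ^ q := Real.rpow_le_rpow_of_nonpos (by positivity) hMx hq0
      _ = M ^ q * 2 ^ (-q) := by
        rw [Real.div_rpow hM.le (by norm_num), Real.rpow_neg (by norm_num), div_eq_mul_inv]
      _ ≤ 2 * M ^ q := by nlinarith [Real.rpow_nonneg hM.le q]

section AbsRpow

variable {p : ℝ}

theorem hasDerivAt_mul_abs_rpow_sub_two_mul_self (hp : 2 < p) (x : ℝ) :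
    HasDerivAt (fun y => p * |y| ^ (p - 2) * y) (p * (p - 1) * |x| ^ (p - 2)) x := by
  simpa only [← mul_assoc, show p - 2 + 1 = p - 1 by ring] using
    (hasDerivAt_abs_rpow_mul_self (by linarith : 0 < p - 2) x).const_mul p

theorem abs_secondOrderTaylorRemainder_abs_rpow_le (hp : 2 < p) (a b : ℝ) :
    |secondOrderTaylorRemainder (fun x => |x| ^ p) (fun x => p * |x| ^ (p - 2) * x)
        (fun x => p * (p - 1) * |x| ^ (p - 2)) a b| ≤ 2 * (1 + p ^ 2) * max |a| |b| ^ p := by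
  set M := max |a| |b|
  have hM : 0 ≤ M := (abs_nonneg a).trans (le_max_left _ _)
  have hbaM : |b - a| ≤ 2 * M := by
    linarith [abs_sub b a, le_max_left |a| |b|, le_max_right |a| |b|]
  have hMp : M ^ p = M ^ (p - 2) * M * M := by
    rw [← Real.rpow_add_one' hM (by linarith), ← Real.rpow_add_one' hM (by linarith)]
    ring_nf
  have hap : |a| ^ p ≤ M ^ p := Real.rpow_le_rpow (abs_nonneg a) (le_max_left _ _) (by linarith)
  have hbp : |b| ^ p ≤ M ^ p := Real.rpow_le_rpow (abs_nonneg b) (le_max_right _ _) (by linarith)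
  have ha2 : |a| ^ (p - 2) ≤ M ^ (p - 2) :=
    Real.rpow_le_rpow (abs_nonneg a) (le_max_left _ _) (by linarith)
  have hlin : |(b - a) * (p * |a| ^ (p - 2) * a)| = |b - a| * (p * |a| ^ (p - 2) * |a|) := by
    rw [abs_mul, abs_mul, abs_mul, abs_of_pos (by linarith : 0 < p),
      abs_of_nonneg (Real.rpow_nonneg (abs_nonneg a) _)]
  have hquad : |(b - a) ^ 2 / 2 * (p * (p - 1) * |a| ^ (p - 2))|
      = |b - a| ^ 2 / 2 * (p * (p - 1) * |a| ^ (p - 2)) := by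
    rw [sq_abs, abs_of_nonneg]
    have : 0 ≤ p * (p - 1) := by nlinarith
    positivity
  calc _ ≤ |b| ^ p + |a| ^ p + |b - a| * (p * |a| ^ (p - 2) * |a|)
          + |b - a| ^ 2 / 2 * (p * (p - 1) * |a| ^ (p - 2)) := by
        unfold secondOrderTaylorRemainder
        rw [← hlin, ← hquad, ← abs_of_nonneg (Real.rpow_nonneg (abs_nonneg b) p),
          ← abs_of_nonneg (Real.rpow_nonneg (abs_nonneg a) p)]
        refine (abs_sub _ _).trans ?_
        gcongr
        refine (abs_sub _ _).trans ?_
        gcongr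
        exact abs_sub _ _
    _ ≤ M ^ p + M ^ p + (2 * M) * (p * M ^ (p - 2) * M)
          + (2 * M) ^ 2 / 2 * (p * (p - 1) * M ^ (p - 2)) := by
        have : 0 ≤ p * (p - 1) := by nlinarith
        gcongr
        exact le_max_left _ _
    _ = 2 * (1 + p ^ 2) * M ^ p := by rw [hMp]; ring

theorem abs_secondOrderTaylorRemainder_abs_rpow_le_of_two_mul_lt (hp : 2 < p) {a b : ℝ}
    (hab : 2 * |b - a| < max |a| |b|) :
    |secondOrderTaylorRemainder (fun x => |x| ^ p) (fun x => p * |x| ^ (p - 2) * x)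
        (fun x => p * (p - 1) * |x| ^ (p - 2)) a b|
      ≤ 2 * (p * (p - 1) * (p - 2)) * max |a| |b| ^ (p - 3) * |b - a| ^ 3 := by
  set M := max |a| |b|
  have hM : 0 < M := lt_of_le_of_lt (by positivity) hab
  have hK : 0 ≤ p * (p - 1) * (p - 2) :=
    mul_nonneg (mul_nonneg (by linarith) (by linarith)) (by linarith)
  have hfar : ∀ x ∈ uIcc a b, M / 2 ≤ |x| := fun x hx => by
    linarith [max_abs_abs_le_abs_add_abs_sub_of_mem_uIcc hx]
  have hx0 : ∀ x ∈ uIcc a b, x ≠ 0 := fun x hx h => by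
    have := hfar x hx
    rw [h, abs_zero] at this
    linarith
  apply abs_secondOrderTaylorRemainder_le
    (f''' := fun x => p * (p - 1) * (p - 2) * (|x| ^ (p - 4) * x))
  · exact fun x _ => hasDerivAt_abs_rpow x (by linarith)
  · exact fun x _ => hasDerivAt_mul_abs_rpow_sub_two_mul_self hp x
  · exact fun x hx => ((hasDerivAt_abs_rpow_of_ne_zero (p - 2) (hx0 x hx)).const_mul _).congr_deriv
      (by ring_nf)
  · intro x hx
    have hx' : |x| ≠ 0 := abs_ne_zero.2 (hx0 x hx)
    have hpow : |x| ^ (p - 4) * |x| = |x| ^ (p - 3) := by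
      rw [← Real.rpow_add_one hx']; ring_nf
    calc |p * (p - 1) * (p - 2) * (|x| ^ (p - 4) * x)| = p * (p - 1) * (p - 2) * |x| ^ (p - 3) := by
          rw [← hpow, abs_mul, abs_of_nonneg hK, abs_mul,
            abs_of_nonneg (Real.rpow_nonneg (abs_nonneg x) _)]
      _ ≤ p * (p - 1) * (p - 2) * (2 * M ^ (p - 3)) := by
          gcongr
          exact Real.rpow_le_two_mul_rpow_of_half_le (by linarith) hM (hfar x hx)
            (abs_le_max_abs_abs_of_mem_uIcc hx)
      _ = 2 * (p * (p - 1) * (p - 2)) * M ^ (p - 3) := by ring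

theorem abs_secondOrderTaylorRemainder_abs_rpow_le_mul_max_rpow (hp : 2 < p) (a b : ℝ) :
    |secondOrderTaylorRemainder (fun x => |x| ^ p) (fun x => p * |x| ^ (p - 2) * x)
        (fun x => p * (p - 1) * |x| ^ (p - 2)) a b|
      ≤ (16 * (1 + p ^ 2) + 2 * (p * (p - 1) * (p - 2))) * |b - a| ^ 3
          * max |a| |b| ^ (p - 3) := by
  set M := max |a| |b|
  have hM : 0 ≤ M := (abs_nonneg a).trans (le_max_left _ _)
  have hK : 0 ≤ p * (p - 1) * (p - 2) :=
    mul_nonneg (mul_nonneg (by linarith) (by linarith)) (by linarith)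
  have hM3 : 0 ≤ M ^ (p - 3) := Real.rpow_nonneg hM _
  rcases le_or_gt M (2 * |b - a|) with hfar | hnear
  · have hMp : M ^ p = M ^ 3 * M ^ (p - 3) := by
      rw [← Real.rpow_natCast, ← Real.rpow_add' hM (ne_of_gt (by push_cast; linarith))]
      norm_num
    calc _ ≤ 2 * (1 + p ^ 2) * M ^ p := abs_secondOrderTaylorRemainder_abs_rpow_le hp a b
      _ ≤ 2 * (1 + p ^ 2) * (2 * |b - a|) ^ 3 * M ^ (p - 3) := by
        rw [hMp, ← mul_assoc]
        gcongr
      _ = 16 * (1 + p ^ 2) * |b - a| ^ 3 * M ^ (p - 3) := by ring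
      _ ≤ _ := by gcongr; linarith
  · calc _ ≤ 2 * (p * (p - 1) * (p - 2)) * M ^ (p - 3) * |b - a| ^ 3 :=
          abs_secondOrderTaylorRemainder_abs_rpow_le_of_two_mul_lt hp hnear
      _ = 2 * (p * (p - 1) * (p - 2)) * |b - a| ^ 3 * M ^ (p - 3) := by ring
      _ ≤ _ := by gcongr; linarith [sq_nonneg p]

end AbsRpow

/-- Improved second-order Taylor remainder bound for `g(x) = p c_p |x|^p`, `p > 2`:
there is `C > 0` such that for all real `t, λ`,
`|g(t) − g(λ) − (t−λ)g'(λ) − ((t−λ)²/2)g''(λ)| ≤ C|t−λ|³ (max(|λ|,|t|))^{p−3}`. -/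
theorem stmt3 (p c : ℝ) (hp : 2 < p) (hc : 0 < c) :
    ∃ C > 0, ∀ t lam : ℝ,
      |gfun p c t - gfun p c lam - (t - lam) * deriv (gfun p c) lam
          - (t - lam) ^ 2 / 2 * deriv (deriv (gfun p c)) lam|
        ≤ C * |t - lam| ^ 3 * (max |lam| |t|) ^ (p - 3) := by
  have hderiv : deriv (gfun p c) = fun x => p * c * (p * |x| ^ (p - 2) * x) :=
    funext fun x => ((hasDerivAt_abs_rpow x (by linarith)).const_mul (p * c)).deriv
  have hderiv2 : deriv (deriv (gfun p c)) = fun x => p * c * (p * (p - 1) * |x| ^ (p - 2)) :=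
    hderiv ▸ funext fun x =>
      ((hasDerivAt_mul_abs_rpow_sub_two_mul_self hp x).const_mul (p * c)).deriv
  have hpc : 0 < p * c := mul_pos (by linarith) hc
  have hK : 0 ≤ p * (p - 1) * (p - 2) :=
    mul_nonneg (mul_nonneg (by linarith) (by linarith)) (by linarith)
  refine ⟨p * c * (16 * (1 + p ^ 2) + 2 * (p * (p - 1) * (p - 2))), by positivity,
    fun t lam => ?_⟩
  calc _ = |p * c * secondOrderTaylorRemainder (fun x => |x| ^ p)
        (fun x => p * |x| ^ (p - 2) * x) (fun x => p * (p - 1) * |x| ^ (p - 2)) lam t| := by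
        rw [hderiv2, hderiv]
        simp only [gfun, secondOrderTaylorRemainder]
        ring_nf
    _ ≤ p * c * ((16 * (1 + p ^ 2) + 2 * (p * (p - 1) * (p - 2))) * |t - lam| ^ 3
          * max |lam| |t| ^ (p - 3)) := by
      rw [abs_mul, abs_of_pos hpc]
      exact mul_le_mul_of_nonneg_left
        (abs_secondOrderTaylorRemainder_abs_rpow_le_mul_max_rpow hp lam t) hpc.le
    _ = _ := by ring
end

section
/- Let μ be a probability measure on [−1,1] with density ϱ satisfying ϱ(t) ≤ M√(1−t) for all t ∈ [−1,1] and some M > 0. Then for all x ∈ (1,2]: ∫_{−1}^{1} dμ(t)/((x−t)(1−t)) ≤ 4M/√(x−1). -/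
open MeasureTheory

/-- If `μ` is a probability measure on `[-1,1]` with density `ϱ` satisfying
`ϱ(t) ≤ M√(1−t)`, then for `x ∈ (1,2]`:
`∫_{−1}^{1} ϱ(t)/((x−t)(1−t)) dt ≤ 4M/√(x−1)`. -/
theorem stmt9 (ϱ : ℝ → ℝ) (M : ℝ) (hM : 0 < M)
    (hϱ0 : ∀ t ∈ Set.Icc (-1 : ℝ) 1, 0 ≤ ϱ t)
    (hϱM : ∀ t ∈ Set.Icc (-1 : ℝ) 1, ϱ t ≤ M * Real.sqrt (1 - t))
    (hprob : ∫ t in (-1 : ℝ)..1, ϱ t = 1)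
    (x : ℝ) (hx : x ∈ Set.Ioc (1 : ℝ) 2) :
    (∫ t in (-1 : ℝ)..1, ϱ t / ((x - t) * (1 - t))) ≤ 4 * M / Real.sqrt (x - 1) := by
  obtain ⟨hx1, hx2⟩ := hx
  set ε : ℝ := x - 1 with hεdef
  have hε : 0 < ε := by simp only [hεdef]; linarith
  have hε1 : ε ≤ 1 := by simp only [hεdef]; linarith
  set c : ℝ := 2 - x with hcdef
  have hc0 : 0 ≤ c := by simp only [hcdef]; linarith
  have hc1 : c ≤ 1 := by simp only [hcdef]; linarith
  have hc1' : (-1 : ℝ) ≤ c := by linarith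
  have hcε : 1 - c = ε := by simp only [hcdef, hεdef]; ring
  have hsqε : 0 < Real.sqrt ε := Real.sqrt_pos.2 hε
  set f : ℝ → ℝ := fun t => ϱ t / ((x - t) * (1 - t)) with hfdef
  -- ϱ is interval integrable
  have hϱint : IntervalIntegrable ϱ volume (-1) 1 := by
    by_contra h
    rw [intervalIntegral.integral_undef h] at hprob
    norm_num at hprob
  have hϱmeas : AEStronglyMeasurable ϱ (volume.restrict (Set.uIoc (-1 : ℝ) 1)) := by
    rw [Set.uIoc_of_le (by norm_num : (-1:ℝ) ≤ 1)]
    exact hϱint.aestronglyMeasurable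
  have hden : Measurable (fun t : ℝ => (x - t) * (1 - t)) :=
    ((measurable_const.sub measurable_id).mul (measurable_const.sub measurable_id))
  have hfm : ∀ a b : ℝ, Set.uIoc a b ⊆ Set.uIoc (-1 : ℝ) 1 →
      AEStronglyMeasurable f (volume.restrict (Set.uIoc a b)) := by
    intro a b hsub
    have h1 : AEMeasurable ϱ (volume.restrict (Set.uIoc a b)) :=
      (hϱmeas.mono_set hsub).aemeasurable
    exact (h1.div hden.aemeasurable).aestronglyMeasurable
  have hsubL : Set.uIoc (-1 : ℝ) c ⊆ Set.uIoc (-1 : ℝ) 1 := by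
    rw [Set.uIoc_of_le hc1', Set.uIoc_of_le (by norm_num : (-1:ℝ) ≤ 1)]
    exact Set.Ioc_subset_Ioc_right hc1
  have hsubR : Set.uIoc c (1 : ℝ) ⊆ Set.uIoc (-1 : ℝ) 1 := by
    rw [Set.uIoc_of_le hc1, Set.uIoc_of_le (by norm_num : (-1:ℝ) ≤ 1)]
    exact Set.Ioc_subset_Ioc_left hc1'
  -- pointwise bound on the left piece
  have hboundL : ∀ t ∈ Set.Icc (-1 : ℝ) c, f t ≤ M * (1 - t) ^ (-3/2 : ℝ) := by
    intro t ht
    obtain ⟨ht1, ht2⟩ := ht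
    have h1t : ε ≤ 1 - t := by rw [← hcε]; linarith
    have h1tpos : (0:ℝ) < 1 - t := lt_of_lt_of_le hε h1t
    have hxt : 1 - t ≤ x - t := by linarith
    have htIcc : t ∈ Set.Icc (-1 : ℝ) 1 := ⟨ht1, by linarith⟩
    have h1 : f t ≤ M * Real.sqrt (1 - t) / ((1 - t) * (1 - t)) := by
      apply div_le_div₀ (by positivity) (hϱM t htIcc) (by positivity)
      exact mul_le_mul_of_nonneg_right hxt h1tpos.le
    refine h1.trans (le_of_eq ?_)
    have hu2 : (1 - t) * (1 - t) = (1 - t) ^ (2:ℝ) := by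
      rw [Real.rpow_two]; ring
    calc M * Real.sqrt (1 - t) / ((1 - t) * (1 - t))
        = M * ((1 - t) ^ (1/2:ℝ) / (1 - t) ^ (2:ℝ)) := by
          rw [Real.sqrt_eq_rpow, hu2]; ring
      _ = M * (1 - t) ^ ((1/2:ℝ) - 2) := by rw [Real.rpow_sub h1tpos]
      _ = M * (1 - t) ^ (-3/2:ℝ) := by norm_num
  -- pointwise bound on the right piece
  have hboundR : ∀ t ∈ Set.Icc c (1 : ℝ), f t ≤ M / ε * (1 - t) ^ (-1/2 : ℝ) := by
    intro t ht
    obtain ⟨ht1, ht2⟩ := ht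
    have htIcc : t ∈ Set.Icc (-1 : ℝ) 1 := ⟨by linarith, ht2⟩
    rcases eq_or_lt_of_le ht2 with heq | hlt
    · have h0 : (1:ℝ) - t = 0 := by rw [heq]; ring
      have hft : f t = 0 := by
        simp only [hfdef, h0, mul_zero, div_zero]
      simp [hft, h0, Real.zero_rpow (show (-1/2:ℝ) ≠ 0 by norm_num)]
    · have h1tpos : (0:ℝ) < 1 - t := by linarith
      have hxt : ε ≤ x - t := by simp only [hεdef]; linarith
      have h1 : f t ≤ M * Real.sqrt (1 - t) / (ε * (1 - t)) := by
        apply div_le_div₀ (by positivity) (hϱM t htIcc) (by positivity)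
        exact mul_le_mul_of_nonneg_right hxt h1tpos.le
      refine h1.trans (le_of_eq ?_)
      calc M * Real.sqrt (1 - t) / (ε * (1 - t))
          = M / ε * ((1 - t) ^ (1/2:ℝ) / (1 - t) ^ (1:ℝ)) := by
            rw [Real.sqrt_eq_rpow, Real.rpow_one]; field_simp
        _ = M / ε * (1 - t) ^ ((1/2:ℝ) - 1) := by rw [Real.rpow_sub h1tpos]
        _ = M / ε * (1 - t) ^ (-1/2:ℝ) := by norm_num
  -- nonnegativity of f on [-1,1]
  have hf0 : ∀ t ∈ Set.Icc (-1 : ℝ) 1, 0 ≤ f t := by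
    intro t ht
    apply div_nonneg (hϱ0 t ht)
    have : t ≤ 1 := ht.2
    have : t ≤ x := by linarith
    nlinarith [ht.2]
  -- integrability of the comparison functions
  have hgL : IntervalIntegrable (fun t : ℝ => M * (1 - t) ^ (-3/2 : ℝ)) volume (-1) c := by
    have base : IntervalIntegrable (fun u : ℝ => u ^ (-3/2 : ℝ)) volume 2 (1 - c) := by
      apply intervalIntegral.intervalIntegrable_rpow
      right
      rw [hcε]
      intro hmem
      rcases Set.mem_uIcc.1 hmem with ⟨h1, _⟩ | ⟨_, h2⟩ <;> linarith
    have h2 := (base.comp_sub_left 1).const_mul M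
    have e1 : (1:ℝ) - 2 = -1 := by norm_num
    have e2 : (1:ℝ) - (1 - c) = c := by ring
    rwa [e1, e2] at h2
  have hgR : IntervalIntegrable (fun t : ℝ => M / ε * (1 - t) ^ (-1/2 : ℝ)) volume c 1 := by
    have base : IntervalIntegrable (fun u : ℝ => u ^ (-1/2 : ℝ)) volume (1 - c) 0 :=
      intervalIntegral.intervalIntegrable_rpow' (by norm_num)
    have h2 := (base.comp_sub_left 1).const_mul (M / ε)
    have e1 : (1:ℝ) - (1 - c) = c := by ring
    have e2 : (1:ℝ) - 0 = 1 := by norm_num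
    rwa [e1, e2] at h2
  -- integrability of f on the two pieces
  have hintL : IntervalIntegrable f volume (-1) c := by
    apply IntervalIntegrable.mono_fun' hgL (hfm _ _ hsubL)
    filter_upwards [ae_restrict_mem measurableSet_uIoc] with t ht
    rw [Set.uIoc_of_le hc1'] at ht
    have htIcc : t ∈ Set.Icc (-1 : ℝ) c := ⟨ht.1.le, ht.2⟩
    rw [Real.norm_eq_abs, abs_of_nonneg (hf0 t ⟨htIcc.1, le_trans htIcc.2 hc1⟩)]
    exact hboundL t htIcc
  have hintR : IntervalIntegrable f volume c 1 := by
    apply IntervalIntegrable.mono_fun' hgR (hfm _ _ hsubR)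
    filter_upwards [ae_restrict_mem measurableSet_uIoc] with t ht
    rw [Set.uIoc_of_le hc1] at ht
    have htIcc : t ∈ Set.Icc c (1:ℝ) := ⟨ht.1.le, ht.2⟩
    rw [Real.norm_eq_abs, abs_of_nonneg (hf0 t ⟨le_trans hc1' htIcc.1, htIcc.2⟩)]
    exact hboundR t htIcc
  -- values of the comparison integrals
  have hIL : (∫ t in (-1:ℝ)..c, M * (1 - t) ^ (-3/2 : ℝ)) ≤ 2 * M / Real.sqrt ε := by
    rw [intervalIntegral.integral_const_mul]
    have hcomp := intervalIntegral.integral_comp_sub_left (a := (-1:ℝ)) (b := c)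
      (fun u : ℝ => u ^ (-3/2 : ℝ)) 1
    rw [hcomp, hcε]
    have e1 : (1:ℝ) - -1 = 2 := by norm_num
    rw [e1]
    have hnotmem : (0:ℝ) ∉ Set.uIcc ε 2 := by
      intro hmem
      rcases Set.mem_uIcc.1 hmem with ⟨h1, _⟩ | ⟨_, h2⟩ <;> linarith
    rw [integral_rpow (Or.inr ⟨by norm_num, hnotmem⟩)]
    have hεr : ε ^ ((-3/2:ℝ) + 1) = (Real.sqrt ε)⁻¹ := by
      rw [Real.sqrt_eq_rpow, ← Real.rpow_neg hε.le]
      norm_num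
    have h2r : (0:ℝ) ≤ (2:ℝ) ^ ((-3/2:ℝ) + 1) := Real.rpow_nonneg (by norm_num) _
    rw [hεr]
    have hs : Real.sqrt ε ≠ 0 := ne_of_gt hsqε
    have key : M * (((2:ℝ) ^ ((-3/2:ℝ) + 1) - (Real.sqrt ε)⁻¹) / ((-3/2:ℝ) + 1))
        = 2 * M / Real.sqrt ε - 2 * M * (2:ℝ) ^ ((-3/2:ℝ) + 1) := by
      rw [show ((-3/2:ℝ) + 1) = -(1/2) by norm_num, div_eq_mul_inv _ (-(1/2):ℝ),
        show ((-(1/2):ℝ))⁻¹ = -2 by norm_num, div_eq_mul_inv (2*M)]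
      ring
    rw [show ((-3:ℝ)/2 + 1) = (-3/2:ℝ) + 1 by norm_num] at *
    rw [key]
    nlinarith [mul_nonneg hM.le h2r]
  have hIR : (∫ t in c..(1:ℝ), M / ε * (1 - t) ^ (-1/2 : ℝ)) ≤ 2 * M / Real.sqrt ε := by
    rw [intervalIntegral.integral_const_mul]
    have hcomp := intervalIntegral.integral_comp_sub_left (a := c) (b := (1:ℝ))
      (fun u : ℝ => u ^ (-1/2 : ℝ)) 1
    rw [hcomp, hcε]
    have e1 : (1:ℝ) - 1 = 0 := by norm_num
    rw [e1]
    rw [integral_rpow (Or.inl (by norm_num))]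
    have hεr : ε ^ ((-1/2:ℝ) + 1) = Real.sqrt ε := by
      rw [Real.sqrt_eq_rpow]
      norm_num
    rw [hεr, Real.zero_rpow (by norm_num : ((-1/2:ℝ) + 1) ≠ 0)]
    have hεs : Real.sqrt ε * Real.sqrt ε = ε := Real.mul_self_sqrt hε.le
    have hs : Real.sqrt ε ≠ 0 := ne_of_gt hsqε
    have key : M / ε * ((Real.sqrt ε - 0) / ((-1/2:ℝ) + 1)) = 2 * M / Real.sqrt ε := by
      rw [show ((-1/2:ℝ) + 1) = 1/2 by norm_num]
      have k1 : M / ε * ((Real.sqrt ε - 0) / (1/2:ℝ)) = 2 * M * Real.sqrt ε / ε := by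
        rw [div_eq_mul_inv _ (1/2:ℝ), show ((1/2:ℝ))⁻¹ = (2:ℝ) by norm_num]
        ring
      rw [k1, div_eq_div_iff hε.ne' hs]
      linear_combination 2 * M * hεs
    rw [show ((-1:ℝ)/2 + 1) = (-1/2:ℝ) + 1 by norm_num]
    rw [key]
  -- combine
  have hL : (∫ t in (-1:ℝ)..c, f t) ≤ 2 * M / Real.sqrt ε :=
    le_trans (intervalIntegral.integral_mono_on hc1' hintL hgL hboundL) hIL
  have hR : (∫ t in c..(1:ℝ), f t) ≤ 2 * M / Real.sqrt ε :=
    le_trans (intervalIntegral.integral_mono_on hc1 hintR hgR hboundR) hIR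
  have hsplit : (∫ t in (-1:ℝ)..1, f t) = (∫ t in (-1:ℝ)..c, f t) + ∫ t in c..(1:ℝ), f t :=
    (intervalIntegral.integral_add_adjacent_intervals hintL hintR).symm
  calc (∫ t in (-1:ℝ)..1, f t) = (∫ t in (-1:ℝ)..c, f t) + ∫ t in c..(1:ℝ), f t := hsplit
    _ ≤ 2 * M / Real.sqrt ε + 2 * M / Real.sqrt ε := add_le_add hL hR
    _ = 4 * M / Real.sqrt ε := by ring
end

section
/- Let r be a positive even integer. If A and B are independent random variables with the arcsine distribution on (−1,1), then E[(Σ_{i=0}^{r−1} A^{r−1−i}B^i)² (1−AB)] ≤ (2r/4^{r−1}) · binom(2r−2, r−1). -/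
/-!
Substituting `a = cos θ`, `b = cos φ` turns the two arcsine densities into the uniform measure on
`[0, π]²`. Expanding, with `n = r - 1` and `s = k + l`, the expectation becomes
`∑_{k, l < r} 𝔼[A^(2n-s) B^s (1 - AB)]`, a combination of the moments `m j = 𝔼[A^j]`, which vanish
for odd `j` and equal `C(2k, k) / 4^k` for `j = 2k`. Grouping by `s`, which occurs
`min (s + 1) (2n + 1 - s)` times, and pairing `s = 2i` with `s = 2i + 1`, the recursion
`m (2i + 2) = (2i + 1)/(2i + 2) · m (2i)` lets the negative odd terms almost cancel the even ones:
each pair contributes at most `2 m (2i) m (2(n - i)) ≤ 2 m (2n)`, and `s = 2n` contributes `m (2n)`.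
Hence the expectation is at most `(2n + 1) m (2n) ≤ 2r · C(2r - 2, r - 1) / 4^(r - 1)`.
-/

open MeasureTheory Real Finset

/-- The `n`-th moment of the arcsine law, realised as the law of `cos Θ` with `Θ` uniform on
`[0, π]`. -/
noncomputable def arcsineMoment (n : ℕ) : ℝ := (∫ θ in (0 : ℝ)..π, cos θ ^ n) / π

@[simp]
theorem arcsineMoment_zero : arcsineMoment 0 = 1 := by
  simp [arcsineMoment, pi_ne_zero]

theorem arcsineMoment_add_two (n : ℕ) :
    arcsineMoment (n + 2) = (n + 1) / (n + 2) * arcsineMoment n := by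
  simp only [arcsineMoment, integral_cos_pow, sin_zero, sin_pi]
  ring

theorem arcsineMoment_two_mul_add_one (k : ℕ) : arcsineMoment (2 * k + 1) = 0 := by
  induction k with
  | zero => simp [arcsineMoment]
  | succ k ih => rw [show 2 * (k + 1) + 1 = 2 * k + 1 + 2 by ring, arcsineMoment_add_two, ih,
      mul_zero]

theorem arcsineMoment_two_mul (k : ℕ) :
    arcsineMoment (2 * k) = k.centralBinom / 4 ^ k := by
  induction k with
  | zero => simp
  | succ k ih =>
    have h : ((k + 1) * (k + 1).centralBinom : ℝ) = 2 * (2 * k + 1) * k.centralBinom := by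
      exact_mod_cast Nat.succ_mul_centralBinom_succ k
    rw [show 2 * (k + 1) = 2 * k + 2 by ring, arcsineMoment_add_two, ih, pow_succ,
      eq_div_iff_mul_eq (by positivity)]
    push_cast
    field_simp
    linear_combination -2 * h

theorem arcsineMoment_two_mul_nonneg (k : ℕ) : 0 ≤ arcsineMoment (2 * k) := by
  rw [arcsineMoment_two_mul]
  positivity

/-- Holds because the ratios `arcsineMoment (2k + 2) / arcsineMoment (2k) = (2k + 1)/(2k + 2)`
increase with `k`. -/
theorem arcsineMoment_two_mul_mul_le (i j : ℕ) :
    arcsineMoment (2 * i) * arcsineMoment (2 * j) ≤ arcsineMoment (2 * (i + j)) := by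
  induction j with
  | zero => simp
  | succ j ih =>
    rw [show 2 * (j + 1) = 2 * j + 2 by ring, show 2 * (i + (j + 1)) = 2 * (i + j) + 2 by ring,
      arcsineMoment_add_two, arcsineMoment_add_two]
    have hratio : ((2 * j : ℕ) + 1 : ℝ) / ((2 * j : ℕ) + 2) ≤
        ((2 * (i + j) : ℕ) + 1 : ℝ) / ((2 * (i + j) : ℕ) + 2) := by
      rw [div_le_div_iff₀ (by positivity) (by positivity)]
      push_cast
      nlinarith [(i.cast_nonneg : (0 : ℝ) ≤ i)]
    rw [mul_left_comm]
    exact mul_le_mul hratio ih (mul_nonneg (arcsineMoment_two_mul_nonneg i)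
      (arcsineMoment_two_mul_nonneg j)) (by positivity)

theorem integral_div_arcsine_density (g : ℝ → ℝ) :
    ∫ x in (-1 : ℝ)..1, g x / (π * √(1 - x ^ 2)) = (∫ θ in (0 : ℝ)..π, g (cos θ)) / π := by
  have hcov := integral_image_eq_integral_abs_deriv_smul measurableSet_Icc
    (fun θ _ => (hasDerivAt_cos θ).hasDerivWithinAt) injOn_cos
    (fun x => g x / (π * √(1 - x ^ 2)))
  rw [bijOn_cos.image_eq, integral_Icc_eq_integral_Ioo, integral_Icc_eq_integral_Ioo] at hcov
  rw [intervalIntegral.integral_of_le (by norm_num), intervalIntegral.integral_of_le pi_pos.le,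
    integral_Ioc_eq_integral_Ioo, integral_Ioc_eq_integral_Ioo, hcov, ← integral_div]
  refine setIntegral_congr_fun measurableSet_Ioo fun θ hθ => ?_
  have hsin : 0 < sin θ := sin_pos_of_pos_of_lt_pi hθ.1 hθ.2
  rw [← sin_sq, sqrt_sq hsin.le, abs_neg, abs_of_pos hsin, smul_eq_mul]
  field_simp

theorem integral_sum_sub_mul_cos_pow {ι : Type*} (s : Finset ι) (c d : ι → ℝ) (e f : ι → ℕ) :
    (∫ θ in (0 : ℝ)..π, ∑ i ∈ s, (c i * cos θ ^ e i - d i * cos θ ^ f i)) / π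
      = ∑ i ∈ s, (c i * arcsineMoment (e i) - d i * arcsineMoment (f i)) := by
  have hint : ∀ m : ℕ, ∀ a : ℝ, IntervalIntegrable (fun θ => a * cos θ ^ m) volume 0 π :=
    fun m a => (by fun_prop : Continuous fun θ => a * cos θ ^ m).intervalIntegrable _ _
  rw [intervalIntegral.integral_finsetSum fun i _ => (hint _ _).sub (hint _ _), sum_div]
  refine sum_congr rfl fun i _ => ?_
  rw [intervalIntegral.integral_sub (hint _ _) (hint _ _), intervalIntegral.integral_const_mul,
    intervalIntegral.integral_const_mul, arcsineMoment, arcsineMoment]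
  ring

theorem integral_integral_div_arcsine_density (h : ℝ → ℝ → ℝ) :
    ∫ a in (-1 : ℝ)..1, ∫ b in (-1 : ℝ)..1, h a b / (π * √(1 - a ^ 2)) / (π * √(1 - b ^ 2))
      = (∫ θ in (0 : ℝ)..π, (∫ φ in (0 : ℝ)..π, h (cos θ) (cos φ)) / π) / π := by
  have hinner (a : ℝ) : ∫ b in (-1 : ℝ)..1, h a b / (π * √(1 - a ^ 2)) / (π * √(1 - b ^ 2))
      = (∫ φ in (0 : ℝ)..π, h a (cos φ)) / π / (π * √(1 - a ^ 2)) := by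
    rw [integral_div_arcsine_density, intervalIntegral.integral_div, div_right_comm]
  simp_rw [hinner]
  exact integral_div_arcsine_density fun a => (∫ φ in (0 : ℝ)..π, h a (cos φ)) / π

theorem geom_sum₂_sq_mul_one_sub {R : Type*} [CommRing R] (n : ℕ) (a b : R) :
    (∑ i ∈ range (n + 1), a ^ (n - i) * b ^ i) ^ 2 * (1 - a * b)
      = ∑ p ∈ range (n + 1) ×ˢ range (n + 1),
          (a ^ (2 * n - (p.1 + p.2)) * b ^ (p.1 + p.2)
            - a ^ (2 * n - (p.1 + p.2) + 1) * b ^ (p.1 + p.2 + 1)) := by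
  rw [sq, sum_mul_sum, sum_product, sum_mul]
  refine sum_congr rfl fun k hk => ?_
  rw [sum_mul]
  refine sum_congr rfl fun l hl => ?_
  have hexp : 2 * n - (k + l) = (n - k) + (n - l) := by
    rw [mem_range] at hk hl; omega
  rw [hexp]
  ring

/-- `mixedMoment n s = 𝔼[A ^ (2n - s) B ^ s (1 - A B)]` for independent arcsine `A`, `B`. -/
noncomputable def mixedMoment (n s : ℕ) : ℝ :=
  arcsineMoment s * arcsineMoment (2 * n - s)
    - arcsineMoment (s + 1) * arcsineMoment (2 * n - s + 1)

theorem integral_integral_geom_sum₂_sq_mul_one_sub (n : ℕ) :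
    (∫ θ in (0 : ℝ)..π, (∫ φ in (0 : ℝ)..π,
        (∑ i ∈ range (n + 1), cos θ ^ (n - i) * cos φ ^ i) ^ 2 * (1 - cos θ * cos φ)) / π) / π
      = ∑ p ∈ range (n + 1) ×ˢ range (n + 1), mixedMoment n (p.1 + p.2) := by
  simp_rw [geom_sum₂_sq_mul_one_sub, integral_sum_sub_mul_cos_pow, mul_comm (cos _ ^ _)]
  rw [integral_sum_sub_mul_cos_pow]
  rfl

theorem card_filter_add_eq (n s : ℕ) (hs : s ≤ 2 * n) :
    #{p ∈ range (n + 1) ×ˢ range (n + 1) | p.1 + p.2 = s} = min (s + 1) (2 * n + 1 - s) := by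
  have hfiber : {p ∈ range (n + 1) ×ˢ range (n + 1) | p.1 + p.2 = s}
      = (Icc (s - n) (min s n)).image fun k => (k, s - k) := by
    ext ⟨k, l⟩
    simp only [mem_filter, mem_product, mem_range, mem_image, mem_Icc, Prod.mk.injEq]
    constructor
    · rintro ⟨⟨hk, hl⟩, rfl⟩
      exact ⟨k, by omega⟩
    · rintro ⟨j, hj, rfl, rfl⟩
      omega
  rw [hfiber, card_image_of_injective _ fun k l h => (Prod.ext_iff.1 h).1, Nat.card_Icc]
  omega

theorem sum_range_product_range_add {M : Type*} [AddCommMonoid M] (n : ℕ) (f : ℕ → M) :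
    ∑ p ∈ range (n + 1) ×ˢ range (n + 1), f (p.1 + p.2)
      = ∑ s ∈ range (2 * n + 1), min (s + 1) (2 * n + 1 - s) • f s := by
  rw [← sum_fiberwise_of_maps_to (g := fun p : ℕ × ℕ => p.1 + p.2) (t := range (2 * n + 1))]
  · refine sum_congr rfl fun s hs => ?_
    rw [sum_congr rfl fun p hp => congrArg f (mem_filter.1 hp).2, sum_const,
      card_filter_add_eq n s (by rw [mem_range] at hs; omega)]
  · intro p hp
    rw [mem_product, mem_range, mem_range] at hp
    rw [mem_range]
    omega

theorem sum_range_two_mul {M : Type*} [AddCommMonoid M] (n : ℕ) (g : ℕ → M) :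
    ∑ s ∈ range (2 * n), g s = ∑ i ∈ range n, (g (2 * i) + g (2 * i + 1)) := by
  induction n with
  | zero => simp
  | succ n ih => rw [show 2 * (n + 1) = 2 * n + 1 + 1 by ring, sum_range_succ, sum_range_succ,
      sum_range_succ, ih, add_assoc]

theorem mixedMoment_two_mul {n i : ℕ} (hi : i ≤ n) :
    mixedMoment n (2 * i) = arcsineMoment (2 * i) * arcsineMoment (2 * (n - i)) := by
  rw [mixedMoment, show 2 * n - 2 * i = 2 * (n - i) by omega, arcsineMoment_two_mul_add_one,
    zero_mul, sub_zero]

theorem mixedMoment_two_mul_add_one {n i : ℕ} (hi : i < n) :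
    mixedMoment n (2 * i + 1) = -(arcsineMoment (2 * i + 2) * arcsineMoment (2 * (n - i))) := by
  rw [mixedMoment, show 2 * n - (2 * i + 1) = 2 * (n - i - 1) + 1 by omega,
    show 2 * (n - i - 1) + 1 + 1 = 2 * (n - i) by omega, arcsineMoment_two_mul_add_one,
    arcsineMoment_two_mul_add_one, zero_mul, zero_sub]

theorem weighted_mixedMoment_pair_le {n i : ℕ} (hi : i < n) :
    min (2 * i + 1) (2 * n + 1 - 2 * i) • mixedMoment n (2 * i)
      + min (2 * i + 1 + 1) (2 * n + 1 - (2 * i + 1)) • mixedMoment n (2 * i + 1)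
      ≤ 2 * arcsineMoment (2 * n) := by
  set N₀ := min (2 * i + 1) (2 * n + 1 - 2 * i)
  set N₁ := min (2 * i + 1 + 1) (2 * n + 1 - (2 * i + 1))
  have hN₀ : (N₀ : ℝ) ≤ 2 * i + 1 := by exact_mod_cast (min_le_left _ _)
  have hN₁ : (N₀ : ℝ) ≤ N₁ + 1 := by exact_mod_cast (show N₀ ≤ N₁ + 1 by omega)
  have hweights : (N₀ : ℝ) - N₁ * ((2 * i + 1) / (2 * i + 2)) ≤ 2 := by
    have hcleared : (N₀ : ℝ) - N₁ * ((2 * i + 1) / (2 * i + 2))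
        = ((2 * i + 2) * N₀ - (2 * i + 1) * N₁) / (2 * i + 2) := by
      field_simp
    rw [hcleared, div_le_iff₀ (by positivity)]
    nlinarith [mul_le_mul_of_nonneg_left hN₁ (by positivity : (0 : ℝ) ≤ 2 * i + 1)]
  have hprod := arcsineMoment_two_mul_mul_le i (n - i)
  rw [show i + (n - i) = n by omega] at hprod
  rw [mixedMoment_two_mul hi.le, mixedMoment_two_mul_add_one hi,
    arcsineMoment_add_two, nsmul_eq_mul, nsmul_eq_mul]
  push_cast
  calc (N₀ : ℝ) * (arcsineMoment (2 * i) * arcsineMoment (2 * (n - i)))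
        + N₁ * -((2 * i + 1) / (2 * i + 2) * arcsineMoment (2 * i) * arcsineMoment (2 * (n - i)))
      = (N₀ - N₁ * ((2 * i + 1) / (2 * i + 2)))
          * (arcsineMoment (2 * i) * arcsineMoment (2 * (n - i))) := by ring
    _ ≤ 2 * arcsineMoment (2 * n) :=
      mul_le_mul hweights hprod (mul_nonneg (arcsineMoment_two_mul_nonneg _)
        (arcsineMoment_two_mul_nonneg _)) zero_le_two

theorem sum_weighted_mixedMoment_le (n : ℕ) :
    ∑ s ∈ range (2 * n + 1), min (s + 1) (2 * n + 1 - s) • mixedMoment n s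
      ≤ (2 * n + 1) * arcsineMoment (2 * n) := by
  have hlast :
      min (2 * n + 1) (2 * n + 1 - 2 * n) • mixedMoment n (2 * n) = arcsineMoment (2 * n) := by
    rw [show min (2 * n + 1) (2 * n + 1 - 2 * n) = 1 by omega, one_smul,
      mixedMoment_two_mul le_rfl, Nat.sub_self, mul_zero, arcsineMoment_zero, mul_one]
  rw [sum_range_succ, sum_range_two_mul]
  calc ∑ i ∈ range n, (min (2 * i + 1) (2 * n + 1 - 2 * i) • mixedMoment n (2 * i)
        + min (2 * i + 1 + 1) (2 * n + 1 - (2 * i + 1)) • mixedMoment n (2 * i + 1))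
        + min (2 * n + 1) (2 * n + 1 - 2 * n) • mixedMoment n (2 * n)
      ≤ ∑ i ∈ range n, 2 * arcsineMoment (2 * n) + arcsineMoment (2 * n) :=
        add_le_add (sum_le_sum fun i hi => weighted_mixedMoment_pair_le (mem_range.1 hi)) hlast.le
    _ = (2 * n + 1) * arcsineMoment (2 * n) := by
        rw [sum_const, card_range, nsmul_eq_mul]
        ring

theorem stmt18_general (r : ℕ) (hpos : 0 < r) :
    (∫ a in (-1 : ℝ)..1, ∫ b in (-1 : ℝ)..1,
        ((∑ i ∈ Finset.range r, a ^ (r - 1 - i) * b ^ i) ^ 2 * (1 - a * b)) /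
            (Real.pi * Real.sqrt (1 - a ^ 2)) / (Real.pi * Real.sqrt (1 - b ^ 2)))
      ≤ 2 * (r : ℝ) / 4 ^ (r - 1) * (Nat.choose (2 * r - 2) (r - 1) : ℝ) := by
  obtain ⟨n, rfl⟩ : ∃ n, r = n + 1 := ⟨r - 1, by omega⟩
  simp only [Nat.add_sub_cancel, show 2 * (n + 1) - 2 = 2 * n by omega]
  rw [integral_integral_div_arcsine_density, integral_integral_geom_sum₂_sq_mul_one_sub,
    sum_range_product_range_add]
  calc _ ≤ (2 * n + 1) * arcsineMoment (2 * n) := sum_weighted_mixedMoment_le n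
    _ ≤ 2 * (n + 1) * arcsineMoment (2 * n) := by
        nlinarith [arcsineMoment_two_mul_nonneg n]
    _ = _ := by
        rw [arcsineMoment_two_mul, Nat.centralBinom_eq_two_mul_choose]
        push_cast
        ring

/-- For `r` a positive even integer and `A, B` independent arcsine random variables on
`(−1,1)`: `E[(Σ_{i=0}^{r−1} A^{r−1−i}B^i)²(1−AB)] ≤ (2r/4^{r−1})·C(2r−2, r−1)`,
stated as a bound on the corresponding double integral against the arcsine densities. -/
theorem stmt18 (r : ℕ) (hr : Even r) (hpos : 0 < r) :
    (∫ a in (-1 : ℝ)..1, ∫ b in (-1 : ℝ)..1,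
        ((∑ i ∈ Finset.range r, a ^ (r - 1 - i) * b ^ i) ^ 2 * (1 - a * b)) /
            (Real.pi * Real.sqrt (1 - a ^ 2)) / (Real.pi * Real.sqrt (1 - b ^ 2)))
      ≤ 2 * (r : ℝ) / 4 ^ (r - 1) * (Nat.choose (2 * r - 2) (r - 1) : ℝ) :=
  stmt18_general r hpos
end
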